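/- Let G_1 and G_2 be finite simple bipartite graphs, both C_{4k}-free (containing no cycle whose length is divisible by 4). Then G_1 and G_2 are cospectral (have equal characteristic polynomials det(xI − A(G_1)) = det(xI − A(G_2))) if and only if they are per-cospectral (have equal permanental polynomials per(xI − A(G_1)) = per(xI − A(G_2))). -/

import Mathlib

open Polynomial SimpleGraph
open scoped Classical

noncomputable section

/-- The adjacency matrix of a simple graph `G`, with entries in `R`. -/
def adjMat (R : Type*) [Zero R] [One R] {V : Type*} [Fintype V] (G : SimpleGraph V) :
    Matrix V V R := fun u v => if G.Adj u v then 1 else 0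

/-- The characteristic polynomial `det (xI - A(G))` of a simple graph `G`. -/
def charPolyG (R : Type*) [CommRing R] {V : Type*} [Fintype V] (G : SimpleGraph V) : R[X] :=
  (adjMat R G).charpoly

/-- The permanental polynomial `per (xI - A(G))` of a simple graph `G`. -/
def permPolyG (R : Type*) [CommRing R] {V : Type*} [Fintype V] (G : SimpleGraph V) : R[X] :=
  (Matrix.charmatrix (adjMat R G)).permanent

/-- The modified characteristic polynomial `φ_p(G,x) = ∑_{i even} (-1)^{i/2} a_i x^{n-i}`
of a (bipartite) graph `G` on `n` vertices, where `a_i` is the coefficient of `x^{n-i}`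
in the characteristic polynomial. -/
def phiP {V : Type*} [Fintype V] (G : SimpleGraph V) : ℝ[X] :=
  ∑ i ∈ Finset.range (Fintype.card V + 1),
    if Even i then
      C ((-1 : ℝ) ^ (i / 2) * (charPolyG ℝ G).coeff (Fintype.card V - i)) *
        X ^ (Fintype.card V - i)
    else 0

/-- `G` contains no cycle whose length is divisible by 4. -/
def C4kFree {V : Type*} (G : SimpleGraph V) : Prop :=
  ¬ ∃ (v : V) (c : G.Walk v v), c.IsCycle ∧ 4 ∣ c.length

/-- `G` is `4k`-intercyclic: it contains no two vertex-disjoint cycles,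
each of length divisible by 4. -/
def Intercyclic4k {V : Type*} (G : SimpleGraph V) : Prop :=
  ¬ ∃ (u v : V) (c : G.Walk u u) (d : G.Walk v v),
      c.IsCycle ∧ d.IsCycle ∧ 4 ∣ c.length ∧ 4 ∣ d.length ∧
      ∀ x, x ∈ c.support → x ∉ d.support

/-- A subgraph `R` of `G` is a cycle of `G` if it is the subgraph traced by some cycle walk. -/
def IsCycleSubgraph {V : Type*} (G : SimpleGraph V) (R : G.Subgraph) : Prop :=
  ∃ (v : V) (c : G.Walk v v), c.IsCycle ∧ R = c.toSubgraph

/-- The set of all `4k`-cycles (cycles of length divisible by 4) of `G`,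
viewed as subgraphs. -/
def cycles4k {V : Type*} (G : SimpleGraph V) : Set G.Subgraph :=
  {R | ∃ (v : V) (c : G.Walk v v), c.IsCycle ∧ 4 ∣ c.length ∧ R = c.toSubgraph}

/-- The connected component `c` of the subgraph `H` is a single edge (a `K₂`). -/
def IsEdgeComp {V : Type*} {G : SimpleGraph V} (H : G.Subgraph)
    (c : H.coe.ConnectedComponent) : Prop :=
  ∃ x y : H.verts, H.coe.Adj x y ∧ c.supp = {x, y}

/-- The connected component `c` of the subgraph `H` is a cycle: there is a cycle walk whose
support is exactly `c` and which uses every edge of `H` inside `c`. -/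
def IsCycleComp {V : Type*} {G : SimpleGraph V} (H : G.Subgraph)
    (c : H.coe.ConnectedComponent) : Prop :=
  ∃ (v : H.verts) (w : H.coe.Walk v v), w.IsCycle ∧
    {x | x ∈ w.support} = c.supp ∧
    ∀ x y : H.verts, H.coe.Adj x y → x ∈ c.supp → w.toSubgraph.Adj x y

/-- A Sachs subgraph of `G`: a subgraph each of whose connected components is either
a single edge or a cycle. -/
def IsSachs {V : Type*} {G : SimpleGraph V} (H : G.Subgraph) : Prop :=
  ∀ c : H.coe.ConnectedComponent, IsEdgeComp H c ∨ IsCycleComp H c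

/-- The number of connected components of the subgraph `H`. -/
def pCount {V : Type*} {G : SimpleGraph V} (H : G.Subgraph) : ℕ :=
  Nat.card H.coe.ConnectedComponent

/-- The number of components of `H` that are cycles of length divisible by 4. -/
def sCount {V : Type*} {G : SimpleGraph V} (H : G.Subgraph) : ℕ :=
  Set.ncard {c : H.coe.ConnectedComponent | IsCycleComp H c ∧ c.supp.ncard % 4 = 0}

/-- The number of components of `H` that are cycles of length congruent to 2 mod 4. -/
def tCount {V : Type*} {G : SimpleGraph V} (H : G.Subgraph) : ℕ :=
  Set.ncard {c : H.coe.ConnectedComponent | IsCycleComp H c ∧ c.supp.ncard % 4 = 2}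

/-- The number of components of `H` that are cycles. -/
def cycCount {V : Type*} {G : SimpleGraph V} (H : G.Subgraph) : ℕ :=
  Set.ncard {c : H.coe.ConnectedComponent | IsCycleComp H c}

/-- `R` is a union of connected components of `H`. -/
def IsComponentUnion {V : Type*} {G : SimpleGraph V} (R H : G.Subgraph) : Prop :=
  R ≤ H ∧ ∀ x y, H.Adj x y → x ∈ R.verts → R.Adj x y


/-!
A permutation `σ` of the vertices contributes to `det (xI - A)` and to `per (xI - A)` only if
every point it moves is adjacent to its image, and then it contributes the same monomial
`(-1)^m x^(n-m)` to both, `m` being the number of moved points, up to the factor `sign σ` in the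
determinant. Each cycle of such a `σ` is either a transposition along an edge or traces a cycle
of the graph of the same length; in a bipartite `C_{4k}`-free graph both have length `≡ 2 mod 4`,
so `sign σ = (-1)^(m/2)`. Hence the coefficients of `x^k` in the two polynomials differ exactly by
the sign `(-1)^((n-k)/2)`, and `n` is the degree of either polynomial.
-/

open Equiv Finset

theorem SimpleGraph.cycleGraph_isContained_of_isCycleOn {V : Type*} {G : SimpleGraph V}
    {f : Perm V} {s : Finset V} {a : V} (hf : f.IsCycleOn s) (ha : a ∈ s)
    (hadj : ∀ x ∈ s, G.Adj x (f x)) : cycleGraph #s ⊑ G := by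
  have hstep : ∀ {u v : Fin #s}, ((u - v : Fin #s) : ℕ) = 1 →
      G.Adj ((f ^ (v : ℕ)) a) ((f ^ (u : ℕ)) a) := by
    intro u v huv
    have hmod : #s - v + u ≡ 1 [MOD #s] := huv ▸ (Nat.mod_modEq _ _).symm
    have hsucc : u ≡ v + 1 [MOD #s] := by
      have := hmod.add_left v
      rw [show v + (#s - v + u) = u + #s by omega] at this
      exact Nat.add_modEq_right.symm.trans this
    rw [(hf.pow_apply_eq_pow_apply ha).2 hsucc, pow_succ', Perm.mul_apply]
    exact hadj _ (hf.1.mapsTo.perm_pow _ ha)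
  refine ⟨⟨⟨fun i => (f ^ (i : ℕ)) a, fun {u v} huv => ?_⟩, fun u v huv => ?_⟩⟩
  · rcases cycleGraph_adj'.1 huv with h | h
    · exact (hstep h).symm
    · exact hstep h
  · exact Fin.ext (((hf.pow_apply_eq_pow_apply ha).1 huv).eq_of_lt_of_lt u.2 v.2)

theorem Multiset.sum_mod_eq_of_forall_mod_eq {s : Multiset ℕ} {m r : ℕ}
    (h : ∀ n ∈ s, n % m = r) : s.sum % m = Multiset.card s * r % m := by
  rw [Multiset.sum_nat_mod, Multiset.map_congr rfl h, Multiset.map_const', Multiset.sum_replicate,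
    smul_eq_mul]

theorem Equiv.Perm.sign_eq_neg_one_pow_of_forall_mem_cycleType {α : Type*} [Fintype α]
    [DecidableEq α] {σ : Perm α} (h : ∀ n ∈ σ.cycleType, n % 4 = 2) :
    sign σ = (-1) ^ (#σ.support / 2) := by
  have hmod := Multiset.sum_mod_eq_of_forall_mod_eq h
  rw [sum_cycleType] at hmod
  rw [sign_of_cycleType, sum_cycleType, Int.units_pow_eq_pow_mod_two,
    Int.units_pow_eq_pow_mod_two (-1) (_ / 2)]
  congr 1
  omega

namespace C4kFree

variable {V : Type*} {G : SimpleGraph V}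

theorem mod_four_eq_two_of_cycleGraph_isContained (hfree : C4kFree G) (hbip : G.Colorable 2)
    {n : ℕ} (hn : 2 ≤ n) (h : cycleGraph n ⊑ G) : n % 4 = 2 := by
  obtain rfl | hn := hn.eq_or_lt
  · rfl
  obtain ⟨v, c, hc, rfl⟩ := (cycleGraph_isContained_iff hn).1 h
  obtain ⟨k, hk⟩ := two_colorable_iff_forall_loop_even.1 hbip v c
  have hndvd : ¬ 4 ∣ c.length := fun h4 => hfree ⟨v, c, hc, h4⟩
  omega

theorem mod_four_eq_two_of_mem_cycleType [Fintype V] [DecidableEq V] (hfree : C4kFree G)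
    (hbip : G.Colorable 2) {σ : Perm V} (hadj : ∀ x ∈ σ.support, G.Adj x (σ x)) :
    ∀ n ∈ σ.cycleType, n % 4 = 2 := by
  intro n hn
  obtain ⟨c, hc, rfl⟩ := Multiset.mem_map.1 hn
  obtain ⟨a, ha⟩ := (Perm.mem_cycleFactorsFinset_iff.1 hc).1.nonempty_support
  refine hfree.mod_four_eq_two_of_cycleGraph_isContained hbip (Perm.two_le_of_mem_cycleType hn) ?_
  exact cycleGraph_isContained_of_isCycleOn (Perm.isCycleOn_support_of_mem_cycleFactorsFinset hc)
    ha fun x hx => hadj x (Perm.mem_cycleFactorsFinset_support_le hc hx)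

end C4kFree

section Polynomials

variable (R : Type*) [CommRing R] {V : Type*} [Fintype V] (G : SimpleGraph V)

theorem prod_charmatrix_adjMat (σ : Perm V) :
    ∏ i, Matrix.charmatrix (adjMat R G) (σ i) i =
      if ∀ x ∈ σ.support, G.Adj x (σ x)
      then (-1) ^ #σ.support * X ^ (Fintype.card V - #σ.support) else 0 := by
  split_ifs with hadj
  · rw [← prod_mul_prod_compl σ.support, ← card_compl]
    congr 1
    · refine prod_const (-1 : R[X]) ▸ prod_congr rfl fun x hx => ?_
      rw [Matrix.charmatrix_apply_ne _ _ _ (Perm.mem_support.1 hx), adjMat,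
        if_pos (hadj x hx).symm, map_one]
    · refine prod_const (X : R[X]) ▸ prod_congr rfl fun x hx => ?_
      rw [Perm.notMem_support.1 (mem_compl.1 hx), Matrix.charmatrix_apply_eq, adjMat,
        if_neg G.irrefl, map_zero, sub_zero]
  · push Not at hadj
    obtain ⟨x, hx, hnadj⟩ := hadj
    refine prod_eq_zero (mem_univ x) ?_
    rw [Matrix.charmatrix_apply_ne _ _ _ (Perm.mem_support.1 hx), adjMat,
      if_neg (fun h => hnadj h.symm), map_zero, neg_zero]

theorem charPolyG_monic : (charPolyG R G).Monic :=
  Matrix.charpoly_monic _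

theorem natDegree_charPolyG [Nontrivial R] : (charPolyG R G).natDegree = Fintype.card V :=
  Matrix.charpoly_natDegree_eq_dim _

variable {R G}

theorem coeff_permPolyG (hbip : G.Colorable 2) (hfree : C4kFree G) (k : ℕ) :
    (permPolyG R G).coeff k = (-1) ^ ((Fintype.card V - k) / 2) * (charPolyG R G).coeff k := by
  rw [permPolyG, charPolyG, Matrix.charpoly, Matrix.det_apply, Matrix.permanent, finsetSum_coeff,
    finsetSum_coeff, mul_sum]
  refine sum_congr rfl fun σ _ => ?_
  rw [prod_charmatrix_adjMat]
  split_ifs with hadj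
  · rw [Perm.sign_eq_neg_one_pow_of_forall_mem_cycleType
      (hfree.mod_four_eq_two_of_mem_cycleType hbip hadj)]
    have hm : #σ.support ≤ Fintype.card V := card_le_univ _
    rw [← C_1, ← C_neg, ← C_pow, Units.smul_def, coeff_smul, coeff_C_mul_X_pow]
    split_ifs with hk
    · subst hk
      rw [Nat.sub_sub_self hm, zsmul_eq_mul]
      push_cast
      rw [← mul_assoc, ← pow_add, Even.neg_one_pow ⟨_, rfl⟩, one_mul]
    · simp
  · simp

theorem natDegree_permPolyG [Nontrivial R] (hbip : G.Colorable 2) (hfree : C4kFree G) :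
    (permPolyG R G).natDegree = Fintype.card V := by
  refine natDegree_eq_of_le_of_coeff_ne_zero ?_ ?_
  · refine natDegree_le_iff_coeff_eq_zero.2 fun k hk => ?_
    rw [coeff_permPolyG hbip hfree, coeff_eq_zero_of_natDegree_lt (natDegree_charPolyG R G ▸ hk),
      mul_zero]
  · rw [coeff_permPolyG hbip hfree, Nat.sub_self, ← natDegree_charPolyG R G, ← leadingCoeff,
      (charPolyG_monic R G).leadingCoeff]
    simp

end Polynomials

/-- Two `C_{4k}`-free bipartite graphs are cospectral iff they are
per-cospectral. -/
theorem stmt_10 {V₁ V₂ : Type*} [Fintype V₁] [Fintype V₂]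
    (G₁ : SimpleGraph V₁) (G₂ : SimpleGraph V₂)
    (hbip₁ : G₁.Colorable 2) (hbip₂ : G₂.Colorable 2)
    (hfree₁ : C4kFree G₁) (hfree₂ : C4kFree G₂) :
    charPolyG ℝ G₁ = charPolyG ℝ G₂ ↔ permPolyG ℝ G₁ = permPolyG ℝ G₂ := by
  constructor
  · intro h
    have hcard : Fintype.card V₁ = Fintype.card V₂ := by
      rw [← natDegree_charPolyG ℝ G₁, h, natDegree_charPolyG]
    ext k
    rw [coeff_permPolyG hbip₁ hfree₁, coeff_permPolyG hbip₂ hfree₂, h, hcard]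
  · intro h
    have hcard : Fintype.card V₁ = Fintype.card V₂ := by
      rw [← natDegree_permPolyG (R := ℝ) hbip₁ hfree₁, h, natDegree_permPolyG hbip₂ hfree₂]
    ext k
    have hk := congrArg (coeff · k) h
    simp only [coeff_permPolyG hbip₁ hfree₁, coeff_permPolyG hbip₂ hfree₂, hcard] at hk
    exact mul_left_cancel₀ (pow_ne_zero _ (neg_ne_zero.2 one_ne_zero)) hk

end
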